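/- arXiv:2512.11217 — 2 statements merged into one kernel-verified Lean document; each statement's English description precedes it below -/
import Mathlib

section
/- If X, Y, Z are independent G-valued finitely supported random variables, then H(X+Y+Z) - H(X+Y) <= H(Y+Z) - H(Y) (Kaimanovich–Vershik / Madiman submodularity inequality). -/
open scoped BigOperators Pointwise
noncomputable section

/-- A finitely supported probability mass function. -/
def IsPMF {α : Type*} (p : α → ℝ) : Prop :=
  (∀ x, 0 ≤ p x) ∧ (Function.support p).Finite ∧ ∑ᶠ x, p x = 1

/-- Shannon entropy of a pmf. -/
def ent {α : Type*} (p : α → ℝ) : ℝ := ∑ᶠ x, -(p x * Real.log (p x))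

/-- Convolution of pmfs: the distribution of the sum of independent random variables. -/
def conv {G : Type*} [AddCommGroup G] (p q : G → ℝ) : G → ℝ :=
  fun z => ∑ᶠ x, p x * q (z - x)

/-- Distribution of the negation. -/
def negp {G : Type*} [AddCommGroup G] (p : G → ℝ) : G → ℝ := fun x => p (-x)

/-- Entropic Ruzsa distance between (the distributions of) two random variables. -/
def rdist {G : Type*} [AddCommGroup G] (p q : G → ℝ) : ℝ :=
  ent (conv p (negp q)) - ent p / 2 - ent q / 2

/-- Distribution of the sum of `n` iid copies. -/
def iterConv {G : Type*} [AddCommGroup G] (p : G → ℝ) : ℕ → G → ℝ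
  | 0 => fun x => Set.indicator ({0} : Set G) (fun _ => (1 : ℝ)) x
  | n + 1 => conv (iterConv p n) p

/-!
Write `s = p ∗ q`, `t = q ∗ r`, `u = s ∗ r`. Then `H(s) + H(t) - H(q) - H(u)` is the conditional
mutual information of `X` and `X + Y` given `X + Y + Z`: the expectation, over independent
`X, Y, Z`, of `log (q(Y) u(X+Y+Z) / (s(X+Y) t(Y+Z)))`. As `log c ≥ 1 - 1/c`, this expectation
is at least `1 - E[s(X+Y) t(Y+Z) / (q(Y) u(X+Y+Z))]`. In the last expectation the weight `q(Y)`
cancels (up to dropping the terms where it vanishes), leaving a sum over `a = X + Y` weighted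
by `s(a)`; the sum over `X` then produces `(p ∗ t)(a+Z) = u(a+Z)` by associativity of
convolution, so the expectation is at most `1`.
-/

open Function Real

section Expectation

variable {α β : Type*}

def expect (p φ : α → ℝ) : ℝ := ∑ᶠ x, p x * φ x

lemma expect_eq_sum {p : α → ℝ} (hp : p.HasFiniteSupport) (φ : α → ℝ) :
    expect p φ = ∑ x ∈ hp.toFinset, p x * φ x :=
  finsum_eq_sum_of_support_subset _ fun _ hx => hp.mem_toFinset.2 (left_ne_zero_of_mul hx)

lemma expect_congr {p φ ψ : α → ℝ} (h : ∀ x, p x ≠ 0 → φ x = ψ x) :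
    expect p φ = expect p ψ :=
  finsum_congr fun x => by by_cases hx : p x = 0 <;> simp [hx, h]

lemma expect_add {p : α → ℝ} (hp : p.HasFiniteSupport) (φ ψ : α → ℝ) :
    expect p (fun x => φ x + ψ x) = expect p φ + expect p ψ := by
  simp only [expect_eq_sum hp, mul_add, Finset.sum_add_distrib]

lemma expect_sub {p : α → ℝ} (hp : p.HasFiniteSupport) (φ ψ : α → ℝ) :
    expect p (fun x => φ x - ψ x) = expect p φ - expect p ψ := by
  simp only [expect_eq_sum hp, mul_sub, Finset.sum_sub_distrib]

lemma expect_const_mul (p φ : α → ℝ) (c : ℝ) :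
    expect p (fun x => c * φ x) = c * expect p φ := by
  simp only [expect, mul_finsum, mul_left_comm]

lemma expect_const {p : α → ℝ} (hp : ∑ᶠ x, p x = 1) (c : ℝ) : expect p (fun _ => c) = c := by
  rw [expect, ← finsum_mul, hp, one_mul]

lemma expect_mono {p φ ψ : α → ℝ} (hp₀ : ∀ x, 0 ≤ p x) (hp : p.HasFiniteSupport)
    (h : ∀ x, p x ≠ 0 → φ x ≤ ψ x) : expect p φ ≤ expect p ψ := by
  rw [expect_eq_sum hp, expect_eq_sum hp]
  exact Finset.sum_le_sum fun x hx =>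
    mul_le_mul_of_nonneg_left (h x (hp.mem_toFinset.1 hx)) (hp₀ x)

lemma expect_div_self_le_finsum {p F : α → ℝ} (hp : p.HasFiniteSupport) (hF : F.HasFiniteSupport)
    (hF₀ : ∀ x, 0 ≤ F x) : expect p (fun x => F x / p x) ≤ ∑ᶠ x, F x := by
  refine finsum_le_finsum' (hp.mul_left _) hF fun x => ?_
  by_cases hx : p x = 0
  · simpa [hx] using hF₀ x
  · exact (mul_div_cancel₀ _ hx).le

lemma expect_comm {p : α → ℝ} {q : β → ℝ} (hp : p.HasFiniteSupport) (hq : q.HasFiniteSupport)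
    (φ : α → β → ℝ) :
    expect p (fun x => expect q (φ x)) = expect q (fun y => expect p (fun x => φ x y)) := by
  simp only [expect_eq_sum hp, expect_eq_sum hq, Finset.mul_sum]
  rw [Finset.sum_comm]
  simp only [mul_left_comm]

lemma expect_prod {p : α → ℝ} {q : β → ℝ} (hp : p.HasFiniteSupport) (hq : q.HasFiniteSupport)
    (φ : α × β → ℝ) :
    expect (fun w => p w.1 * q w.2) φ = expect p (fun x => expect q (fun y => φ (x, y))) := by
  have hsupp : support (fun w : α × β => p w.1 * q w.2 * φ w) ⊆ ↑(hp.toFinset ×ˢ hq.toFinset) := by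
    intro w hw
    simp only [mem_support, ne_eq, mul_eq_zero, not_or] at hw
    exact Finset.mem_product.2 ⟨hp.mem_toFinset.2 hw.1.1, hq.mem_toFinset.2 hw.1.2⟩
  rw [expect, finsum_eq_sum_of_support_subset _ hsupp, Finset.sum_product]
  simp only [expect_eq_sum hp, expect_eq_sum hq, Finset.mul_sum, mul_assoc]

lemma IsPMF.prod {p : α → ℝ} {q : β → ℝ} (hp : IsPMF p) (hq : IsPMF q) :
    IsPMF (fun w : α × β => p w.1 * q w.2) := by
  refine ⟨fun w => mul_nonneg (hp.1 w.1) (hq.1 w.2), (hp.2.1.prod hq.2.1).subset ?_, ?_⟩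
  · intro w hw
    simp only [mem_support, ne_eq, mul_eq_zero, not_or] at hw
    exact ⟨hw.1, hw.2⟩
  · have h := expect_prod hp.2.1 hq.2.1 (fun _ => 1)
    simp only [expect_const hq.2.2, expect_const hp.2.2] at h
    simpa [expect] using h

lemma ent_eq_neg_expect_log (p : α → ℝ) : ent p = -expect p (fun x => log (p x)) := by
  rw [ent, expect, finsum_neg_distrib]

lemma expect_nonneg_of_expect_exp_neg_le_one {w L : α → ℝ} (hw : IsPMF w)
    (h : expect w (fun x => exp (-L x)) ≤ 1) : 0 ≤ expect w L := by
  have hle : expect w (fun x => 1 - exp (-L x)) ≤ expect w L :=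
    expect_mono hw.1 hw.2.1 fun x _ => by linarith [add_one_le_exp (-L x)]
  rw [expect_sub hw.2.1, expect_const hw.2.2] at hle
  linarith

end Expectation

section Convolution

variable {G : Type*} [AddCommGroup G]

lemma conv_eq_expect (p q : G → ℝ) (z : G) : conv p q z = expect p (fun x => q (z - x)) := rfl

lemma support_conv_subset (p q : G → ℝ) : support (conv p q) ⊆ support p + support q := by
  intro z hz
  by_contra hzpq
  refine hz (finsum_eq_zero_of_forall_eq_zero fun x => ?_)
  by_cases hx : p x = 0
  · simp [hx]
  · have hq : q (z - x) = 0 := by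
      by_contra hq
      exact hzpq ⟨x, hx, z - x, hq, add_sub_cancel _ _⟩
    simp [hq]

variable {p q : G → ℝ}

lemma expect_conv (hp : p.HasFiniteSupport) (hq : q.HasFiniteSupport) (φ : G → ℝ) :
    expect (conv p q) φ = expect p (fun x => expect q (fun y => φ (x + y))) := by
  have hshift (x : G) : ∑ᶠ a, q (a - x) * φ a = expect q (fun y => φ (x + y)) := by
    simpa [expect] using finsum_comp_equiv (Equiv.subRight x) (f := fun y => q y * φ (x + y))
  calc expect (conv p q) φ
      = ∑ᶠ a, ∑ x ∈ hp.toFinset, p x * (q (a - x) * φ a) := by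
        rw [expect]
        simp only [conv_eq_expect, expect_eq_sum hp, Finset.sum_mul, mul_assoc]
    _ = ∑ x ∈ hp.toFinset, p x * ∑ᶠ a, q (a - x) * φ a := by
        rw [finsum_sum_comm _ _ fun x _ => by fun_prop (disch := exact sub_left_injective)]
        simp only [mul_finsum]
    _ = expect p (fun x => expect q (fun y => φ (x + y))) := by
        simp only [hshift, expect_eq_sum hp]

lemma conv_assoc (hp : p.HasFiniteSupport) (hq : q.HasFiniteSupport) (r : G → ℝ) :
    conv (conv p q) r = conv p (conv q r) := by
  ext b
  simp only [conv_eq_expect (conv p q), expect_conv hp hq, sub_add_eq_sub_sub]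
  rfl

lemma IsPMF.conv (hp : IsPMF p) (hq : IsPMF q) : IsPMF (conv p q) := by
  refine ⟨fun z => finsum_nonneg fun x => mul_nonneg (hp.1 x) (hq.1 _),
    (hp.2.1.add hq.2.1).subset (support_conv_subset p q), ?_⟩
  have h := expect_conv hp.2.1 hq.2.1 (fun _ => 1)
  simp only [expect_const hq.2.2, expect_const hp.2.2] at h
  simpa [expect] using h

lemma expect_div_mul_le_expect_sub {s K : G → ℝ} (hq : q.HasFiniteSupport) (hs₀ : ∀ a, 0 ≤ s a)
    (hs : s.HasFiniteSupport) (hK₀ : ∀ y, 0 ≤ K y) (x : G) :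
    expect q (fun y => s (x + y) / q y * K y) ≤ expect s (fun a => K (a - x)) :=
  calc expect q (fun y => s (x + y) / q y * K y)
      = expect q (fun y => s (x + y) * K y / q y) := by simp only [div_mul_eq_mul_div]
    _ ≤ ∑ᶠ y, s (x + y) * K y :=
        expect_div_self_le_finsum hq
          ((HasFiniteSupport.comp_of_injective (add_right_injective x) hs).mul_left K)
          fun y => mul_nonneg (hs₀ _) (hK₀ y)
    _ = expect s (fun a => K (a - x)) := by
        simpa [expect] using (finsum_comp_equiv (Equiv.subRight x)
          (f := fun y => s (x + y) * K y)).symm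

lemma conv_add_pos (hp : IsPMF p) (hq : IsPMF q) {x y : G} (hx : p x ≠ 0) (hy : q y ≠ 0) :
    0 < conv p q (x + y) := by
  have h := single_le_finsum (f := fun x' => p x' * q (x + y - x')) x
    (HasFiniteSupport.mul_left hp.2.1 _) fun x' => mul_nonneg (hp.1 x') (hq.1 _)
  rw [add_sub_cancel_left] at h
  exact (mul_pos ((hp.1 x).lt_of_ne' hx) ((hq.1 y).lt_of_ne' hy)).trans_le h

end Convolution

section Submodularity

variable {G : Type*} [AddCommGroup G] {p q r : G → ℝ}

lemma expect_conv_ratio_le_one (hp : IsPMF p) (hq : IsPMF q) (hr : IsPMF r) :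
    expect p (fun x => expect q (fun y => expect r (fun z =>
      conv p q (x + y) / q y * (conv q r (y + z) / conv (conv p q) r (x + y + z))))) ≤ 1 := by
  set s := conv p q
  set t := conv q r
  set u := conv s r
  have hs : IsPMF s := hp.conv hq
  have hu (b : G) : expect p (fun x => t (b - x)) = u b :=
    (congrFun (conv_assoc hp.2.1 hq.2.1 r) b).symm
  have hdrop (x : G) :
      expect q (fun y => expect r (fun z => s (x + y) / q y * (t (y + z) / u (x + y + z)))) ≤
        expect s (fun a => expect r (fun z => t (a - x + z) / u (a + z))) := by
    simp only [expect_const_mul]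
    refine (expect_div_mul_le_expect_sub hq.2.1 hs.1 hs.2.1 (fun y => ?_) x).trans_eq ?_
    · exact finsum_nonneg fun z =>
        mul_nonneg (hr.1 z) (div_nonneg ((hq.conv hr).1 _) ((hs.conv hr).1 _))
    · simp only [add_sub_cancel]
  calc expect p (fun x => expect q (fun y => expect r (fun z =>
        s (x + y) / q y * (t (y + z) / u (x + y + z)))))
      ≤ expect p (fun x => expect s (fun a => expect r (fun z => t (a - x + z) / u (a + z)))) :=
        expect_mono hp.1 hp.2.1 fun x _ => hdrop x
    _ = expect s (fun a => expect r (fun z => expect p (fun x => t (a + z - x) / u (a + z)))) := by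
        simp only [expect_comm hp.2.1 hs.2.1, expect_comm hp.2.1 hr.2.1, sub_add_eq_add_sub]
    _ ≤ expect s (fun _ => expect r (fun _ => 1)) :=
        expect_mono hs.1 hs.2.1 fun a _ => expect_mono hr.1 hr.2.1 fun z _ => by
          simp only [div_eq_inv_mul, expect_const_mul, hu]
          rw [← div_eq_inv_mul]
          exact div_self_le_one _
    _ = 1 := by rw [expect_const hr.2.2, expect_const hs.2.2]

/-- The pointwise conditional mutual information of `X` and `X + Y` given `X + Y + Z`,
at `X = x, Y = y, Z = z`. -/
def pointwiseCondMutualInfo (p q r : G → ℝ) (x y z : G) : ℝ :=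
  log (q y) + log (conv (conv p q) r (x + y + z)) - log (conv p q (x + y)) - log (conv q r (y + z))

lemma expect_pointwiseCondMutualInfo (hp : IsPMF p) (hq : IsPMF q) (hr : IsPMF r) :
    expect p (fun x => expect q (fun y => expect r (fun z => pointwiseCondMutualInfo p q r x y z)))
      = ent (conv p q) + ent (conv q r) - ent q - ent (conv (conv p q) r) := by
  simp only [pointwiseCondMutualInfo, expect_sub hp.2.1, expect_sub hq.2.1, expect_sub hr.2.1,
    expect_add hp.2.1, expect_add hq.2.1, expect_add hr.2.1, ent_eq_neg_expect_log,
    expect_const hr.2.2, expect_const hp.2.2]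
  rw [expect_conv hp.2.1 hq.2.1, expect_conv hq.2.1 hr.2.1, expect_conv (hp.conv hq).2.1 hr.2.1,
    expect_conv hp.2.1 hq.2.1]
  ring

lemma exp_neg_pointwiseCondMutualInfo (hp : IsPMF p) (hq : IsPMF q) (hr : IsPMF r) {x y z : G}
    (hx : p x ≠ 0) (hy : q y ≠ 0) (hz : r z ≠ 0) :
    exp (-pointwiseCondMutualInfo p q r x y z)
      = conv p q (x + y) / q y * (conv q r (y + z) / conv (conv p q) r (x + y + z)) := by
  have hs := conv_add_pos hp hq hx hy
  have hqy := (hq.1 y).lt_of_ne' hy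
  have ht := conv_add_pos hq hr hy hz
  have hu := conv_add_pos (hp.conv hq) hr hs.ne' hz
  rw [← exp_log (div_pos hs hqy), ← exp_log (div_pos ht hu), ← exp_add,
    log_div hs.ne' hqy.ne', log_div ht.ne' hu.ne', pointwiseCondMutualInfo]
  ring_nf

lemma expect_pointwiseCondMutualInfo_nonneg (hp : IsPMF p) (hq : IsPMF q) (hr : IsPMF r) :
    0 ≤ expect p (fun x => expect q (fun y => expect r (fun z =>
      pointwiseCondMutualInfo p q r x y z))) := by
  have hE (φ : G × G × G → ℝ) : expect (fun v => p v.1 * (q v.2.1 * r v.2.2)) φ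
      = expect p (fun x => expect q (fun y => expect r (fun z => φ (x, y, z)))) := by
    rw [expect_prod hp.2.1 (hq.prod hr).2.1]
    simp only [expect_prod hq.2.1 hr.2.1]
  rw [← hE (fun v => pointwiseCondMutualInfo p q r v.1 v.2.1 v.2.2)]
  refine expect_nonneg_of_expect_exp_neg_le_one (hp.prod (hq.prod hr)) ?_
  rw [expect_congr (ψ := fun v => conv p q (v.1 + v.2.1) / q v.2.1 *
      (conv q r (v.2.1 + v.2.2) / conv (conv p q) r (v.1 + v.2.1 + v.2.2))), hE]
  · exact expect_conv_ratio_le_one hp hq hr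
  · rintro ⟨x, y, z⟩ hxyz
    simp only [ne_eq, mul_eq_zero, not_or] at hxyz
    exact exp_neg_pointwiseCondMutualInfo hp hq hr hxyz.1 hxyz.2.1 hxyz.2.2

end Submodularity

/-- Kaimanovich–Vershik / Madiman: for independent `X, Y, Z`,
`H(X+Y+Z) - H(X+Y) ≤ H(Y+Z) - H(Y)`; stated at the level of distributions via convolution. -/
theorem entropy_submodularity {G : Type*} [AddCommGroup G] (p q r : G → ℝ)
    (hp : IsPMF p) (hq : IsPMF q) (hr : IsPMF r) :
    ent (conv (conv p q) r) - ent (conv p q) ≤ ent (conv q r) - ent q := by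
  have h := expect_pointwiseCondMutualInfo_nonneg hp hq hr
  rw [expect_pointwiseCondMutualInfo hp hq hr] at h
  linarith
end
end

section
/- For any G-valued random variable X and integer n >= 1, H((n+1)X) - H(nX) <= (1/n)(H((n+1)X) - H(X)). In particular, the entropy increments H((j+1)X) - H(jX) are non-increasing in j. -/
open scoped BigOperators Pointwise
noncomputable section

/-! Submodularity of entropy, `H(X,Y,Z) + H(Z) ≤ H(X,Z) + H(Y,Z)`, follows from Gibbs'
inequality `log t ≤ t - 1` applied against the coupling of `X` and `Y` that is conditionally
independent given `Z`. For independent `x, y, z` it yields, with `X = x`, `Y = (x + y, z)` and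
`Z = x + y + z`, the inequality `H(x + y + z) + H(y) ≤ H(x + y) + H(y + z)`. Taking for `x` and
`z` copies of `X` and for `y` a sum of `k` copies shows that `k ↦ H(kX)` is concave, so its
increments are non-increasing, and `H((n+1)X) - H(X)`, a sum of `n` increments each at least
`H((n+1)X) - H(nX)`, is at least `n (H((n+1)X) - H(nX))`. -/

open Function Real Finset

section

variable {Ω Ω' α β γ δ : Type*}

def law (μ : Ω → ℝ) (f : Ω → α) : α → ℝ := fun a => ∑ᶠ ω ∈ f ⁻¹' {a}, μ ω

def prodMass (μ : α → ℝ) (ν : β → ℝ) : α × β → ℝ := fun x => μ x.1 * ν x.2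

section Law

variable {μ : Ω → ℝ} {f : Ω → α}

theorem law_apply_eq_sum [DecidableEq α] {s : Finset Ω} (hs : support μ ⊆ s) (a : α) :
    law μ f a = ∑ ω ∈ s with f ω = a, μ ω :=
  finsum_mem_eq_sum_of_subset _ (fun ω hω => by simpa using And.intro (hs hω.2) hω.1)
    (fun ω hω => by simpa using (mem_filter.1 hω).2)

theorem law_nonneg (hμ : ∀ ω, 0 ≤ μ ω) (a : α) : 0 ≤ law μ f a :=
  finsum_nonneg fun ω => finsum_nonneg fun _ => hμ ω

theorem support_law_subset : support (law μ f) ⊆ f '' support μ := fun a ha => by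
  obtain ⟨ω, hω, hμω⟩ := exists_ne_zero_of_finsum_mem_ne_zero ha
  exact ⟨ω, hμω, hω⟩

theorem support_law_finite (hfin : (support μ).Finite) : (support (law μ f)).Finite :=
  (hfin.image f).subset support_law_subset

theorem le_law (hμ : ∀ ω, 0 ≤ μ ω) (hfin : (support μ).Finite) (ω : Ω) :
    μ ω ≤ law μ f (f ω) := by
  classical
  rw [law_apply_eq_sum (s := insert ω hfin.toFinset) (by simp [Set.subset_insert])]
  exact single_le_sum (fun ω _ => hμ ω) (by simp)

theorem law_apply_of_injective (hf : Injective f) (ω : Ω) : law μ f (f ω) = μ ω := by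
  rw [law, show f ⁻¹' {f ω} = {ω} from Set.ext fun _ => hf.eq_iff, finsum_mem_singleton]

theorem law_id : law μ id = μ :=
  funext (law_apply_of_injective injective_id)

theorem law_comp_equiv (e : Ω' ≃ Ω) : law (μ ∘ e) (f ∘ e) = law μ f :=
  funext fun _ => finsum_mem_eq_of_bijOn e (e.bijOn fun _ => Iff.rfl) fun _ _ => rfl

theorem sum_image_law_mul [DecidableEq α] {s : Finset Ω} (hs : support μ ⊆ s) (g : α → ℝ) :
    ∑ a ∈ s.image f, law μ f a * g a = ∑ ω ∈ s, μ ω * g (f ω) := by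
  rw [← sum_fiberwise_of_maps_to (fun ω hω => mem_image_of_mem f hω)]
  refine sum_congr rfl fun a _ => ?_
  rw [law_apply_eq_sum hs, sum_mul]
  exact sum_congr rfl fun ω hω => by rw [(mem_filter.1 hω).2]

theorem law_comp (hfin : (support μ).Finite) (g : α → β) : law (law μ f) g = law μ (g ∘ f) := by
  classical
  funext b
  have hs : support μ ⊆ hfin.toFinset := hfin.coe_toFinset.ge
  rw [law_apply_eq_sum (s := hfin.toFinset.image f) (by simpa using support_law_subset),
    law_apply_eq_sum hs]
  calc ∑ a ∈ hfin.toFinset.image f with g a = b, law μ f a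
      = ∑ a ∈ hfin.toFinset.image f, law μ f a * if g a = b then 1 else 0 := by
        simp only [sum_filter, mul_boole]
    _ = ∑ ω ∈ hfin.toFinset, μ ω * if g (f ω) = b then 1 else 0 := sum_image_law_mul hs _
    _ = ∑ ω ∈ hfin.toFinset with g (f ω) = b, μ ω := by simp only [sum_filter, mul_boole]

end Law

theorem support_prodMass (μ : α → ℝ) (ν : β → ℝ) :
    support (prodMass μ ν) = support μ ×ˢ support ν := by
  ext x
  simp [prodMass]

theorem law_prodMap {μ : α → ℝ} {ν : β → ℝ} (hμ : (support μ).Finite) (hν : (support ν).Finite)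
    (f : α → γ) (g : β → δ) :
    law (prodMass μ ν) (Prod.map f g) = prodMass (law μ f) (law ν g) := by
  classical
  funext ⟨c, d⟩
  have hs : support μ ⊆ hμ.toFinset := hμ.coe_toFinset.ge
  have ht : support ν ⊆ hν.toFinset := hν.coe_toFinset.ge
  rw [law_apply_eq_sum (s := hμ.toFinset ×ˢ hν.toFinset)
      (by rw [support_prodMass, coe_product]; exact Set.prod_mono hs ht),
    prodMass, law_apply_eq_sum hs, law_apply_eq_sum ht, sum_mul_sum, ← sum_product',
    ← filter_product]
  simp [prodMass, Prod.ext_iff]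

theorem ent_eq_sum {p : α → ℝ} {s : Finset α} (hs : support p ⊆ s) :
    ent p = ∑ x ∈ s, negMulLog (p x) := by
  rw [ent, finsum_eq_sum_of_support_subset _ fun x hx => hs fun h => hx (by simp [h])]
  simp [negMulLog]

theorem ent_law {μ : Ω → ℝ} {s : Finset Ω} (hs : support μ ⊆ s) (f : Ω → α) :
    ent (law μ f) = ∑ ω ∈ s, μ ω * -log (law μ f (f ω)) := by
  classical
  rw [ent_eq_sum (s := s.image f) (support_law_subset.trans (by rw [coe_image]; exact Set.image_mono hs)),
    ← sum_image_law_mul hs fun a => -log (law μ f a)]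
  simp [negMulLog]

theorem ent_law_of_injective {μ : Ω → ℝ} (hfin : (support μ).Finite) {f : Ω → α}
    (hf : Injective f) : ent (law μ f) = ent μ := by
  have hs : support μ ⊆ hfin.toFinset := hfin.coe_toFinset.ge
  rw [ent_law hs, ent_eq_sum hs]
  simp [law_apply_of_injective hf, negMulLog]

theorem IsPMF.sum_eq_one {p : α → ℝ} (hp : IsPMF p) {s : Finset α} (hs : support p ⊆ s) :
    ∑ x ∈ s, p x = 1 := by
  rw [← finsum_eq_sum_of_support_subset p hs, hp.2.2]

theorem ent_prodMass {p : α → ℝ} {q : β → ℝ} (hp : IsPMF p) (hq : IsPMF q) :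
    ent (prodMass p q) = ent p + ent q := by
  have hs : support p ⊆ hp.2.1.toFinset := hp.2.1.coe_toFinset.ge
  have ht : support q ⊆ hq.2.1.toFinset := hq.2.1.coe_toFinset.ge
  rw [ent_eq_sum (s := hp.2.1.toFinset ×ˢ hq.2.1.toFinset)
      (by rw [support_prodMass, coe_product]; exact Set.prod_mono hs ht),
    sum_product, ent_eq_sum hs, ent_eq_sum ht]
  simp only [prodMass, negMulLog_mul, sum_add_distrib, ← sum_mul, ← mul_sum, hp.sum_eq_one hs,
    hq.sum_eq_one ht, one_mul]

theorem isPMF_prodMass {p : α → ℝ} {q : β → ℝ} (hp : IsPMF p) (hq : IsPMF q) :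
    IsPMF (prodMass p q) := by
  refine ⟨fun x => mul_nonneg (hp.1 _) (hq.1 _),
    by simpa only [support_prodMass] using hp.2.1.prod hq.2.1, ?_⟩
  rw [finsum_eq_sum_of_support_subset _ (s := hp.2.1.toFinset ×ˢ hq.2.1.toFinset)
    (by simp [support_prodMass]), sum_product]
  simp [prodMass, ← mul_sum, hp.sum_eq_one hp.2.1.coe_toFinset.ge,
    hq.sum_eq_one hq.2.1.coe_toFinset.ge]

theorem isPMF_law {μ : Ω → ℝ} (hμ : IsPMF μ) (f : Ω → α) : IsPMF (law μ f) := by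
  classical
  have hs : support μ ⊆ hμ.2.1.toFinset := hμ.2.1.coe_toFinset.ge
  refine ⟨law_nonneg hμ.1, support_law_finite hμ.2.1, ?_⟩
  rw [finsum_eq_sum_of_support_subset _ (s := hμ.2.1.toFinset.image f)
    (support_law_subset.trans (by rw [coe_image]; exact Set.image_mono hs))]
  simpa [hμ.sum_eq_one hs] using sum_image_law_mul hs (fun _ => 1)

def condIndepCoupling (μ : Ω → ℝ) (X : Ω → α) (Y : Ω → β) (Z : Ω → γ) : α × β × γ → ℝ :=
  fun v => law μ (fun ω => (X ω, Z ω)) (v.1, v.2.2) * law μ (fun ω => (Y ω, Z ω)) (v.2.1, v.2.2)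
    / law μ Z v.2.2

section Submodular

variable {μ : Ω → ℝ} (X : Ω → α) (Y : Ω → β) (Z : Ω → γ)

theorem condIndepCoupling_nonneg (hμ : ∀ ω, 0 ≤ μ ω) (v : α × β × γ) :
    0 ≤ condIndepCoupling μ X Y Z v :=
  div_nonneg (mul_nonneg (law_nonneg hμ _) (law_nonneg hμ _)) (law_nonneg hμ _)

theorem sum_image_law_pair [DecidableEq α] [DecidableEq γ] {s : Finset Ω} (hs : support μ ⊆ s)
    (z : γ) : ∑ x ∈ s.image X, law μ (fun ω => (X ω, Z ω)) (x, z) = law μ Z z := by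
  rw [law_apply_eq_sum hs, ← sum_fiberwise_of_maps_to (g := X)
    fun ω hω => mem_image_of_mem X (mem_filter.1 hω).1]
  refine sum_congr rfl fun x _ => ?_
  rw [law_apply_eq_sum hs, filter_filter]
  simp [Prod.ext_iff, and_comm]

theorem sum_condIndepCoupling [DecidableEq α] [DecidableEq β] [DecidableEq γ] {s : Finset Ω}
    (hs : support μ ⊆ s) :
    ∑ v ∈ s.image X ×ˢ s.image Y ×ˢ s.image Z, condIndepCoupling μ X Y Z v = ∑ ω ∈ s, μ ω := by
  calc ∑ v ∈ s.image X ×ˢ s.image Y ×ˢ s.image Z, condIndepCoupling μ X Y Z v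
      = ∑ z ∈ s.image Z, (∑ x ∈ s.image X, law μ (fun ω => (X ω, Z ω)) (x, z)) *
          (∑ y ∈ s.image Y, law μ (fun ω => (Y ω, Z ω)) (y, z)) / law μ Z z := by
        simp only [sum_product, condIndepCoupling, sum_mul_sum, sum_div]
        exact (sum_congr rfl fun _ _ => sum_comm).trans sum_comm
    _ = ∑ z ∈ s.image Z, law μ Z z := by
        simp only [sum_image_law_pair _ _ hs, mul_self_div_self]
    _ = ∑ ω ∈ s, μ ω := by simpa using sum_image_law_mul (f := Z) hs fun _ => 1

theorem sum_mul_condIndepCoupling_div_law_le [DecidableEq α] [DecidableEq β] [DecidableEq γ]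
    (hμ : ∀ ω, 0 ≤ μ ω) {s : Finset Ω} (hs : support μ ⊆ s) :
    ∑ ω ∈ s, μ ω * (condIndepCoupling μ X Y Z (X ω, Y ω, Z ω) /
      law μ (fun ω => (X ω, Y ω, Z ω)) (X ω, Y ω, Z ω)) ≤ ∑ ω ∈ s, μ ω := by
  set XYZ := fun ω => (X ω, Y ω, Z ω)
  calc ∑ ω ∈ s, μ ω * (condIndepCoupling μ X Y Z (XYZ ω) / law μ XYZ (XYZ ω))
      = ∑ v ∈ s.image XYZ, law μ XYZ v * (condIndepCoupling μ X Y Z v / law μ XYZ v) :=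
        (sum_image_law_mul hs fun v => condIndepCoupling μ X Y Z v / law μ XYZ v).symm
    _ ≤ ∑ v ∈ s.image XYZ, condIndepCoupling μ X Y Z v := by
        refine sum_le_sum fun v _ => ?_
        rcases (law_nonneg hμ (f := XYZ) v).eq_or_lt with h | h
        · rw [← h, zero_mul]
          exact condIndepCoupling_nonneg X Y Z hμ v
        · exact (mul_div_cancel₀ _ h.ne').le
    _ ≤ ∑ v ∈ s.image X ×ˢ s.image Y ×ˢ s.image Z, condIndepCoupling μ X Y Z v := by
        refine sum_le_sum_of_subset_of_nonneg (fun v hv => ?_)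
          fun v _ _ => condIndepCoupling_nonneg X Y Z hμ v
        obtain ⟨ω, hω, rfl⟩ := mem_image.1 hv
        simp only [XYZ, mem_product]
        exact ⟨mem_image_of_mem X hω, mem_image_of_mem Y hω, mem_image_of_mem Z hω⟩
    _ = ∑ ω ∈ s, μ ω := sum_condIndepCoupling X Y Z hs

theorem ent_law_submodular (hμ : ∀ ω, 0 ≤ μ ω) (hfin : (support μ).Finite) :
    ent (law μ fun ω => (X ω, Y ω, Z ω)) + ent (law μ Z) ≤
      ent (law μ fun ω => (X ω, Z ω)) + ent (law μ fun ω => (Y ω, Z ω)) := by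
  classical
  set s := hfin.toFinset
  have hs : support μ ⊆ s := hfin.coe_toFinset.ge
  have hmass := sum_mul_condIndepCoupling_div_law_le X Y Z hμ hs
  set XYZ := fun ω => (X ω, Y ω, Z ω)
  set ratio := fun v => condIndepCoupling μ X Y Z v / law μ XYZ v with hratio
  have hpoint : ∀ ω ∈ s, μ ω * -log (law μ XYZ (XYZ ω)) + μ ω * -log (law μ Z (Z ω)) -
      μ ω * -log (law μ (fun ω => (X ω, Z ω)) (X ω, Z ω)) -
      μ ω * -log (law μ (fun ω => (Y ω, Z ω)) (Y ω, Z ω)) ≤ μ ω * ratio (XYZ ω) - μ ω := by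
    intro ω _
    rcases (hμ ω).eq_or_lt with h | h
    · simp [← h]
    have hXYZ : 0 < law μ XYZ (XYZ ω) := h.trans_le (le_law hμ hfin ω)
    have hZ : 0 < law μ Z (Z ω) := h.trans_le (le_law hμ hfin ω)
    have hXZ : 0 < law μ (fun ω => (X ω, Z ω)) (X ω, Z ω) := h.trans_le (le_law hμ hfin ω)
    have hYZ : 0 < law μ (fun ω => (Y ω, Z ω)) (Y ω, Z ω) := h.trans_le (le_law hμ hfin ω)
    have hlog : log (ratio (XYZ ω)) = log (law μ (fun ω => (X ω, Z ω)) (X ω, Z ω)) +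
        log (law μ (fun ω => (Y ω, Z ω)) (Y ω, Z ω)) - log (law μ Z (Z ω)) -
        log (law μ XYZ (XYZ ω)) := by
      simp only [hratio, condIndepCoupling]
      rw [log_div (by positivity) hXYZ.ne', log_div (by positivity) hZ.ne',
        log_mul hXZ.ne' hYZ.ne']
    have hpos : 0 < ratio (XYZ ω) := by
      simp only [hratio, condIndepCoupling]
      positivity
    have hgibbs := mul_le_mul_of_nonneg_left (log_le_sub_one_of_pos hpos) h.le
    rw [hlog] at hgibbs
    linarith
  have hsum := sum_le_sum hpoint
  simp only [sum_sub_distrib, sum_add_distrib] at hsum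
  rw [ent_law hs, ent_law hs, ent_law hs, ent_law hs]
  linarith

end Submodular

theorem ent_law_comp_of_injective {μ : Ω → ℝ} (hfin : (support μ).Finite) (f : Ω → α)
    {g : α → β} (hg : Injective g) : ent (law μ (g ∘ f)) = ent (law μ f) := by
  rw [← law_comp hfin, ent_law_of_injective (support_law_finite hfin) hg]

theorem prodMass_comp_prodAssoc_symm (p : α → ℝ) (q : β → ℝ) (r : γ → ℝ) :
    prodMass (prodMass p q) r ∘ (Equiv.prodAssoc α β γ).symm = prodMass p (prodMass q r) := by
  funext ω
  simp [prodMass, mul_assoc]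

section AddCommGroup

variable {G : Type*} [AddCommGroup G]

theorem conv_eq_law (p q : G → ℝ) : conv p q = law (prodMass p q) fun x => x.1 + x.2 := by
  funext z
  rw [conv, law, ← finsum_mem_univ]
  refine finsum_mem_eq_of_bijOn (fun x => (x, z - x)) ⟨fun x _ => by simp, fun x _ y _ h =>
    congrArg Prod.fst h, fun v hv => ⟨v.1, trivial, ?_⟩⟩ fun _ _ => rfl
  simp only [Set.mem_preimage, Set.mem_singleton_iff] at hv
  simp [← hv]

theorem conv_comm (p q : G → ℝ) : conv p q = conv q p := by
  funext z
  rw [conv, conv, ← finsum_comp_equiv (Equiv.subLeft z)]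
  simp [mul_comm]

theorem isPMF_conv {p q : G → ℝ} (hp : IsPMF p) (hq : IsPMF q) : IsPMF (conv p q) := by
  rw [conv_eq_law]
  exact isPMF_law (isPMF_prodMass hp hq) _

theorem law_prodMass_assoc_add {p q r : G → ℝ} (hp : (support p).Finite)
    (hq : (support q).Finite) (hr : (support r).Finite) :
    law (prodMass p (prodMass q r)) (fun ω => (ω.1 + ω.2.1, ω.2.2)) = prodMass (conv p q) r := by
  rw [← prodMass_comp_prodAssoc_symm, show (fun ω : G × G × G => (ω.1 + ω.2.1, ω.2.2)) =
      Prod.map (fun x => x.1 + x.2) id ∘ (Equiv.prodAssoc G G G).symm from rfl, law_comp_equiv,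
    law_prodMap (by rw [support_prodMass]; exact hp.prod hq) hr, law_id, ← conv_eq_law]

theorem ent_conv_add_ent_le {p q r : G → ℝ} (hp : IsPMF p) (hq : IsPMF q) (hr : IsPMF r) :
    ent (conv (conv p q) r) + ent q ≤ ent (conv p q) + ent (conv q r) := by
  set μ := prodMass p (prodMass q r)
  have hμ : IsPMF μ := isPMF_prodMass hp (isPMF_prodMass hq hr)
  set Y : G × G × G → G × G := fun ω => (ω.1 + ω.2.1, ω.2.2)
  have hlawY : law μ Y = prodMass (conv p q) r := law_prodMass_assoc_add hp.2.1 hq.2.1 hr.2.1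
  have hXYZ : ent (law μ fun ω => (ω.1, Y ω, ω.1 + ω.2.1 + ω.2.2)) = ent p + ent q + ent r := by
    rw [ent_law_of_injective hμ.2.1, ent_prodMass hp (isPMF_prodMass hq hr),
      ent_prodMass hq hr, add_assoc]
    intro ω ω' h
    simp only [Y, Prod.mk.injEq] at h
    obtain ⟨h1, ⟨h2, h3⟩, -⟩ := h
    rw [h1, add_right_inj] at h2
    exact Prod.ext h1 (Prod.ext h2 h3)
  have hXZ : ent (law μ fun ω => (ω.1, ω.1 + ω.2.1 + ω.2.2)) = ent p + ent (conv q r) := by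
    rw [show (fun ω : G × G × G => (ω.1, ω.1 + ω.2.1 + ω.2.2)) =
        (fun v => (v.1, v.1 + v.2)) ∘ Prod.map id fun x => x.1 + x.2 by
        funext ω; simp [add_assoc],
      ent_law_comp_of_injective hμ.2.1 _ ?_, law_prodMap hp.2.1 (isPMF_prodMass hq hr).2.1,
      law_id, ← conv_eq_law, ent_prodMass hp (isPMF_conv hq hr)]
    intro v w h
    obtain ⟨h1, h2⟩ := Prod.mk.inj h
    rw [h1, add_right_inj] at h2
    exact Prod.ext h1 h2
  have hYZ : ent (law μ fun ω => (Y ω, ω.1 + ω.2.1 + ω.2.2)) = ent (conv p q) + ent r := by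
    rw [show (fun ω => (Y ω, ω.1 + ω.2.1 + ω.2.2)) = (fun v => (v, v.1 + v.2)) ∘ Y from rfl,
      ent_law_comp_of_injective hμ.2.1 _ fun v w h => congrArg Prod.fst h, hlawY,
      ent_prodMass (isPMF_conv hp hq) hr]
  have hZ : law μ (fun ω => ω.1 + ω.2.1 + ω.2.2) = conv (conv p q) r := by
    rw [show (fun ω : G × G × G => ω.1 + ω.2.1 + ω.2.2) = (fun v => v.1 + v.2) ∘ Y from rfl,
      ← law_comp hμ.2.1, hlawY, ← conv_eq_law]
  have := ent_law_submodular (fun ω => ω.1) Y (fun ω => ω.1 + ω.2.1 + ω.2.2) hμ.1 hμ.2.1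
  rw [hXYZ, hXZ, hYZ, hZ] at this
  linarith

theorem isPMF_iterConv {p : G → ℝ} (hp : IsPMF p) : ∀ n, IsPMF (iterConv p n)
  | 0 => by
    refine ⟨fun x => Set.indicator_nonneg (fun _ _ => zero_le_one) x,
      (Set.finite_singleton 0).subset Set.support_indicator_subset, ?_⟩
    rw [iterConv, ← finsum_mem_def, finsum_mem_singleton]
  | n + 1 => isPMF_conv (isPMF_iterConv hp n) hp

theorem iterConv_one (p : G → ℝ) : iterConv p 1 = p := by
  funext z
  rw [iterConv, conv, finsum_eq_single _ 0 fun x hx => by simp [iterConv, hx]]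
  simp [iterConv]

end AddCommGroup

theorem antitone_sub_of_add_le_two_mul {h : ℕ → ℝ} (hh : ∀ k, h (k + 2) + h k ≤ 2 * h (k + 1)) :
    Antitone fun k => h (k + 1) - h k :=
  antitone_nat_of_succ_le fun k => by linarith [hh k]

theorem nat_mul_sub_le_sub_of_antitone {h : ℕ → ℝ} (hd : Antitone fun k => h (k + 1) - h k)
    {n : ℕ} (hn : 1 ≤ n) : n * (h (n + 1) - h n) ≤ h (n + 1) - h 1 := by
  induction n, hn using Nat.le_induction with
  | base => simp
  | succ m _ ih =>
    have := mul_le_mul_of_nonneg_left (hd (Nat.le_succ m)) (Nat.cast_nonneg (α := ℝ) m)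
    push_cast
    linarith

end

/-- `H((n+1)X) - H(nX) ≤ (1/n)(H((n+1)X) - H(X))`; in particular the entropy
increments `H((j+1)X) - H(jX)` are non-increasing in `j`. -/
theorem entropy_increment_bound {G : Type*} [AddCommGroup G] (p : G → ℝ) (hp : IsPMF p)
    (n : ℕ) (hn : 1 ≤ n) :
    ent (iterConv p (n + 1)) - ent (iterConv p n) ≤
        (1 / n) * (ent (iterConv p (n + 1)) - ent p) ∧
      ∀ j k : ℕ, 1 ≤ j → j ≤ k →
        ent (iterConv p (k + 1)) - ent (iterConv p k) ≤
          ent (iterConv p (j + 1)) - ent (iterConv p j) := by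
  have hconcave (k : ℕ) :
      ent (iterConv p (k + 2)) + ent (iterConv p k) ≤ 2 * ent (iterConv p (k + 1)) := by
    have h := ent_conv_add_ent_le hp (isPMF_iterConv hp k) hp
    rw [conv_comm p] at h
    change ent (iterConv p (k + 2)) + ent (iterConv p k) ≤
      ent (iterConv p (k + 1)) + ent (iterConv p (k + 1)) at h
    linarith
  have hanti := antitone_sub_of_add_le_two_mul (h := fun k => ent (iterConv p k)) hconcave
  refine ⟨?_, fun j k _ hjk => hanti hjk⟩
  have hbound := nat_mul_sub_le_sub_of_antitone (h := fun k => ent (iterConv p k)) hanti hn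
  rw [iterConv_one] at hbound
  rw [one_div, inv_mul_eq_div, le_div_iff₀ (by positivity)]
  linarith
end
end
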